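/- Let T have the log-normal density f_T(t) = (1/(t√(8πσ²)))·exp(−(ln t + 2σ²)²/(8σ²)) on (0,∞), let G have the density f_G(g) = (ξ²/h₀^{ξ²})·g^{ξ²−1} on [0, h₀], with T and G independent, and let p > 0, C_d = h₀·p, C_e = 2σ²(1 + 2ξ²). Then H = p·T·G has density f_H(h) = (ξ² h^{ξ²−1} / (2 C_d^{ξ²})) · exp(2σ²ξ²(1+ξ²)) · erfc( (ln(h/C_d) + C_e) / √(8σ²) ) for h > 0. -/

import Mathlib

open Real MeasureTheory

/-- The complementary error function `erfc(x) = (2/√π)∫_x^∞ e^{−t²} dt`. -/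
noncomputable def erfc (x : ℝ) : ℝ :=
  2 / Real.sqrt π * ∫ t in Set.Ioi x, Real.exp (-t ^ 2)

/-!
Write `H = T · (p G)`. The variable `p G` again has a pointing-error density, with `h₀` replaced
by `C_d = h₀ p`, so `H` has density `∫ f_T(t) f_{pG}(h/t) dt / t`, where only `t ≥ h / C_d`
contributes. Substituting `u = log t` turns the log-normal factor into the Gaussian
`exp(-(u + 2σ²)² / (8σ²))` and the factor `(h/t)^(ξ²-1) / t` into a constant times `exp(-ξ² u)`;
completing the square in this tilted Gaussian leaves a Gaussian tail, i.e. an `erfc`.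
-/

open Set ProbabilityTheory
open scoped ENNReal

theorem lintegral_Ioi_exp_neg_sq (x : ℝ) :
    ∫⁻ s in Ioi x, ENNReal.ofReal (exp (-s ^ 2)) = ENNReal.ofReal (√π / 2 * erfc x) := by
  have hint : Integrable fun s : ℝ => exp (-s ^ 2) := by
    simpa using integrable_exp_neg_mul_sq one_pos
  rw [← ofReal_integral_eq_lintegral_ofReal hint.integrableOn
    (ae_of_all _ fun _ => (exp_pos _).le), erfc]
  have : √π ≠ 0 := (sqrt_pos.mpr pi_pos).ne'
  field_simp

theorem lintegral_Ioi_exp_neg_sq_div {a : ℝ} (ha : 0 < a) (b L : ℝ) :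
    ∫⁻ u in Ioi L, ENNReal.ofReal (exp (-((u - b) / a) ^ 2)) =
      ENNReal.ofReal (a * √π / 2 * erfc ((L - b) / a)) := by
  have himage : (fun s => a * s + b) '' Ioi ((L - b) / a) = Ioi L := by
    rw [show (fun s => a * s + b) = (· + b) ∘ (a * ·) from rfl, image_comp,
      image_mul_left_Ioi ha, image_add_const_Ioi, mul_div_cancel₀ _ ha.ne', sub_add_cancel]
  have hderiv : ∀ s ∈ Ioi ((L - b) / a),
      HasDerivWithinAt (fun s => a * s + b) a (Ioi ((L - b) / a)) s :=
    fun s _ => by simpa using ((hasDerivAt_id s).const_mul a).add_const b |>.hasDerivWithinAt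
  have hinj : InjOn (fun s => a * s + b) (Ioi ((L - b) / a)) := fun s _ s' _ h => by
    simpa [ha.ne'] using h
  rw [← himage, lintegral_image_eq_lintegral_abs_deriv_mul measurableSet_Ioi hderiv hinj]
  simp only [add_sub_cancel_right, mul_div_cancel_left₀ _ ha.ne', abs_of_pos ha]
  rw [lintegral_const_mul _ (by fun_prop), lintegral_Ioi_exp_neg_sq, ← ENNReal.ofReal_mul ha.le]
  ring_nf

theorem lintegral_Ioi_exp_neg_sq_div_mul_exp {a : ℝ} (ha : 0 < a) (m k L : ℝ) :
    ∫⁻ u in Ioi L, ENNReal.ofReal (exp (-((u - m) / a) ^ 2) * exp (-(k * u))) =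
      ENNReal.ofReal (a * √π / 2 * exp (k ^ 2 * a ^ 2 / 4 - k * m) *
        erfc ((L - m + k * a ^ 2 / 2) / a)) := by
  have hcomplete_square : ∀ u, exp (-((u - m) / a) ^ 2) * exp (-(k * u)) =
      exp (k ^ 2 * a ^ 2 / 4 - k * m) * exp (-((u - (m - k * a ^ 2 / 2)) / a) ^ 2) := by
    intro u
    rw [← exp_add, ← exp_add]
    congr 1
    field_simp
    ring
  simp_rw [hcomplete_square, ENNReal.ofReal_mul (exp_pos _).le]
  rw [lintegral_const_mul _ (by fun_prop), lintegral_Ioi_exp_neg_sq_div ha,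
    ← ENNReal.ofReal_mul (exp_pos _).le, sub_sub_eq_add_sub, add_sub_right_comm]
  ring_nf

theorem lintegral_comp_log_Ioi (g : ℝ → ℝ≥0∞) {a : ℝ} (ha : 0 < a) :
    ∫⁻ x in Ioi a, ENNReal.ofReal x⁻¹ * g (log x) = ∫⁻ y in Ioi (log a), g y := by
  have himage : exp '' Ioi (log a) = Ioi a := by rw [image_exp_Ioi, exp_log ha]
  rw [← himage, lintegral_image_eq_lintegral_abs_deriv_mul measurableSet_Ioi
    (fun x _ => (hasDerivAt_exp x).hasDerivWithinAt) exp_injective.injOn]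
  refine lintegral_congr fun y => ?_
  rw [← mul_assoc, ← ENNReal.ofReal_mul (abs_nonneg _), abs_of_pos (exp_pos y),
    mul_inv_cancel₀ (exp_pos y).ne', ENNReal.ofReal_one, one_mul, log_exp]

theorem setLIntegral_preimage_const_mul {c : ℝ} (hc : c ≠ 0) {f : ℝ → ℝ≥0∞}
    (hf : Measurable f) {A : Set ℝ} (hA : MeasurableSet A) :
    ∫⁻ y in (c * ·) ⁻¹' A, f y = ENNReal.ofReal |c|⁻¹ * ∫⁻ z in A, f (z / c) := by
  have hmap := setLIntegral_map (μ := volume) hA (hf.comp (measurable_id.div_const c))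
    (measurable_const_mul c)
  simp only [Function.comp_apply, id, mul_div_cancel_left₀ _ hc] at hmap
  rw [← hmap, Real.map_volume_mul_left hc, Measure.restrict_smul, lintegral_smul_measure,
    smul_eq_mul, abs_inv]

theorem map_const_mul_withDensity {c : ℝ} (hc : c ≠ 0) {f : ℝ → ℝ≥0∞} (hf : Measurable f) :
    (volume.withDensity f).map (c * ·) =
      volume.withDensity fun y => ENNReal.ofReal |c|⁻¹ * f (y / c) := by
  ext A hA
  rw [Measure.map_apply (measurable_const_mul c) hA,
    withDensity_apply _ (measurable_const_mul c hA), withDensity_apply _ hA,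
    setLIntegral_preimage_const_mul hc hf hA]
  exact (lintegral_const_mul _ (by fun_prop)).symm

theorem map_mul_eq_withDensity_of_indepFun {Ω : Type*} [MeasurableSpace Ω] {P : Measure Ω}
    [IsFiniteMeasure P] {X Y : Ω → ℝ} (hX : Measurable X) (hY : Measurable Y)
    (hXY : IndepFun X Y P) {fX fY : ℝ → ℝ≥0∞} (hfX : Measurable fX) (hfY : Measurable fY)
    (hXd : P.map X = volume.withDensity fX) (hYd : P.map Y = volume.withDensity fY) :
    P.map (fun ω => X ω * Y ω) =
      volume.withDensity fun z => ∫⁻ x, fX x * ENNReal.ofReal |x|⁻¹ * fY (z / x) := by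
  have hmul : Measurable fun q : ℝ × ℝ => q.1 * q.2 := measurable_fst.mul measurable_snd
  have hprod :
      P.map (fun ω => X ω * Y ω) = ((P.map X).prod (P.map Y)).map fun q => q.1 * q.2 := by
    rw [← (indepFun_iff_map_prod_eq_prod_map_map hX.aemeasurable hY.aemeasurable).mp hXY,
      Measure.map_map hmul (hX.prodMk hY)]
    rfl
  ext A hA
  have hslice : ∀ᵐ x : ℝ, fX x * P.map Y ((x * ·) ⁻¹' A) =
      ∫⁻ z in A, fX x * ENNReal.ofReal |x|⁻¹ * fY (z / x) := by
    filter_upwards [volume.ae_ne 0] with x hx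
    rw [hYd, withDensity_apply _ (measurable_const_mul x hA),
      setLIntegral_preimage_const_mul hx hfY hA, ← mul_assoc]
    exact (lintegral_const_mul _ (by fun_prop)).symm
  rw [hprod, Measure.map_apply hmul hA, Measure.prod_apply (hmul hA), hXd,
    lintegral_withDensity_eq_lintegral_mul _ hfX (measurable_measure_prodMk_left (hmul hA)),
    withDensity_apply _ hA]
  calc ∫⁻ x, fX x * P.map Y ((x * ·) ⁻¹' A)
      = ∫⁻ x, ∫⁻ z in A, fX x * ENNReal.ofReal |x|⁻¹ * fY (z / x) := lintegral_congr_ae hslice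
    _ = ∫⁻ z in A, ∫⁻ x, fX x * ENNReal.ofReal |x|⁻¹ * fY (z / x) :=
      lintegral_lintegral_swap (by fun_prop)

/-- Log-normal irradiance under weak turbulence: `log T ∼ 𝓝(-2σ², 4σ²)`, so that `𝔼[T] = 1`. -/
noncomputable def turbulencePDF (σ t : ℝ) : ℝ :=
  if 0 < t then
    1 / (t * Real.sqrt (8 * π * σ ^ 2)) * Real.exp (-(Real.log t + 2 * σ ^ 2) ^ 2 / (8 * σ ^ 2))
  else 0

noncomputable def pointingErrorPDF (ξ h₀ g : ℝ) : ℝ :=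
  if g ∈ Icc (0 : ℝ) h₀ then ξ ^ 2 / h₀ ^ (ξ ^ 2 : ℝ) * g ^ (ξ ^ 2 - 1 : ℝ) else 0

theorem measurable_turbulencePDF (σ : ℝ) : Measurable (turbulencePDF σ) :=
  Measurable.ite measurableSet_Ioi (by fun_prop) measurable_const

theorem measurable_pointingErrorPDF (ξ h₀ : ℝ) : Measurable (pointingErrorPDF ξ h₀) :=
  Measurable.ite measurableSet_Icc (by fun_prop) measurable_const

theorem inv_mul_pointingErrorPDF_div {c : ℝ} (hc : 0 < c) (ξ h₀ y : ℝ) :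
    c⁻¹ * pointingErrorPDF ξ h₀ (y / c) = pointingErrorPDF ξ (h₀ * c) y := by
  have hmem : y / c ∈ Icc 0 h₀ ↔ y ∈ Icc 0 (h₀ * c) := by
    simp only [mem_Icc, le_div_iff₀ hc, div_le_iff₀ hc, zero_mul]
  unfold pointingErrorPDF
  split_ifs with hy hy' hy'
  · have hh₀ : 0 ≤ h₀ := hy.1.trans hy.2
    rw [div_rpow hy'.1 hc.le, mul_rpow hh₀ hc.le, rpow_sub_one hc.ne']
    field_simp
  · exact absurd (hmem.mp hy) hy'
  · exact absurd (hmem.mpr hy') hy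
  · ring

theorem turbulencePDF_nonneg (σ t : ℝ) : 0 ≤ turbulencePDF σ t := by
  unfold turbulencePDF
  split_ifs <;> positivity

/-- Written in the shape of `lintegral_Ioi_exp_neg_sq_div_mul_exp`, with mean `m = -2σ²`. -/
theorem turbulencePDF_mul_pointingErrorPDF_div {σ ξ C h t : ℝ} (hC : 0 < C) (hh : 0 < h)
    (ht : h / C ≤ t) :
    turbulencePDF σ t * pointingErrorPDF ξ C (h / t) =
      ξ ^ 2 * h ^ (ξ ^ 2 - 1 : ℝ) / (C ^ (ξ ^ 2 : ℝ) * √π * √(8 * σ ^ 2)) *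
        (exp (-((log t - -(2 * σ ^ 2)) / √(8 * σ ^ 2)) ^ 2) * exp (-(ξ ^ 2 * log t))) := by
  have ht₀ : 0 < t := (div_pos hh hC).trans_le ht
  have hmem : h / t ∈ Icc 0 C := ⟨by positivity, by rwa [div_le_iff₀ ht₀, ← div_le_iff₀' hC]⟩
  have hsqrt : √(8 * π * σ ^ 2) = √π * √(8 * σ ^ 2) := by
    rw [mul_right_comm, mul_comm, sqrt_mul pi_pos.le]
  have hpow : exp (-(ξ ^ 2 * log t)) = (t ^ (ξ ^ 2 : ℝ))⁻¹ := by
    rw [exp_neg, rpow_def_of_pos ht₀, mul_comm]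
  rw [turbulencePDF, pointingErrorPDF, if_pos ht₀, if_pos hmem, hsqrt, hpow, sub_neg_eq_add,
    div_pow, sq_sqrt (by positivity), div_rpow hh.le ht₀.le, rpow_sub_one ht₀.ne']
  have : 0 < t ^ (ξ ^ 2 : ℝ) := by positivity
  field_simp

theorem lintegral_turbulencePDF_mul_pointingErrorPDF {σ ξ C h : ℝ} (hσ : σ ≠ 0) (hC : 0 < C)
    (hh : 0 < h) :
    ∫⁻ t, ENNReal.ofReal (turbulencePDF σ t) * ENNReal.ofReal |t|⁻¹ *
        ENNReal.ofReal (pointingErrorPDF ξ C (h / t)) =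
      ENNReal.ofReal (ξ ^ 2 * h ^ (ξ ^ 2 - 1 : ℝ) / (2 * C ^ (ξ ^ 2 : ℝ)) *
        exp (2 * σ ^ 2 * ξ ^ 2 * (1 + ξ ^ 2)) *
        erfc ((log (h / C) + 2 * σ ^ 2 * (1 + 2 * ξ ^ 2)) / √(8 * σ ^ 2))) := by
  set a := √(8 * σ ^ 2)
  have ha : 0 < a := sqrt_pos.mpr (by positivity)
  have ha2 : a ^ 2 = 8 * σ ^ 2 := sq_sqrt (by positivity)
  set K := ξ ^ 2 * h ^ (ξ ^ 2 - 1 : ℝ) / (C ^ (ξ ^ 2 : ℝ) * √π * a)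
  have hK : 0 ≤ K := by positivity
  have hc : 0 < h / C := div_pos hh hC
  have hsupport : (fun t => ENNReal.ofReal (turbulencePDF σ t) * ENNReal.ofReal |t|⁻¹ *
      ENNReal.ofReal (pointingErrorPDF ξ C (h / t))).support ⊆ Ici (h / C) := by
    refine Function.support_subset_iff'.mpr fun t ht => ?_
    rcases le_or_gt t 0 with ht₀ | ht₀
    · simp [turbulencePDF, not_lt.mpr ht₀]
    · have : C < h / t := by
        rw [lt_div_iff₀ ht₀, mul_comm]
        exact (lt_div_iff₀ hC).mp (not_le.mp ht)
      simp [pointingErrorPDF, not_le.mpr this]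
  have hform : ∀ t ∈ Ioi (h / C), ENNReal.ofReal (turbulencePDF σ t) * ENNReal.ofReal |t|⁻¹ *
      ENNReal.ofReal (pointingErrorPDF ξ C (h / t)) = ENNReal.ofReal t⁻¹ *
        ENNReal.ofReal
          (K * (exp (-((log t - -(2 * σ ^ 2)) / a) ^ 2) * exp (-(ξ ^ 2 * log t)))) := by
    intro t ht
    have ht₀ : 0 < t := hc.trans ht
    rw [mul_right_comm, ← ENNReal.ofReal_mul (turbulencePDF_nonneg σ t), abs_of_pos ht₀,
      mul_comm, turbulencePDF_mul_pointingErrorPDF_div hC hh (le_of_lt ht)]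
  calc _ = ∫⁻ t in Ioi (h / C), ENNReal.ofReal (turbulencePDF σ t) * ENNReal.ofReal |t|⁻¹ *
        ENNReal.ofReal (pointingErrorPDF ξ C (h / t)) := by
        rw [restrict_Ioi_eq_restrict_Ici, setLIntegral_eq_of_support_subset hsupport]
    _ = ∫⁻ u in Ioi (log (h / C)), ENNReal.ofReal
          (K * (exp (-((u - -(2 * σ ^ 2)) / a) ^ 2) * exp (-(ξ ^ 2 * u)))) := by
        rw [setLIntegral_congr_fun measurableSet_Ioi hform]
        exact lintegral_comp_log_Ioi (fun u => ENNReal.ofReal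
          (K * (exp (-((u - -(2 * σ ^ 2)) / a) ^ 2) * exp (-(ξ ^ 2 * u))))) hc
    _ = _ := by
        simp_rw [ENNReal.ofReal_mul hK]
        rw [lintegral_const_mul _ (by fun_prop), lintegral_Ioi_exp_neg_sq_div_mul_exp ha,
          ← ENNReal.ofReal_mul hK]
        congr 1
        rw [ha2, show (ξ ^ 2) ^ 2 * (8 * σ ^ 2) / 4 - ξ ^ 2 * -(2 * σ ^ 2) =
            2 * σ ^ 2 * ξ ^ 2 * (1 + ξ ^ 2) by ring,
          show log (h / C) - -(2 * σ ^ 2) + ξ ^ 2 * (8 * σ ^ 2) / 2 =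
            log (h / C) + 2 * σ ^ 2 * (1 + 2 * ξ ^ 2) by ring]
        have : √π ≠ 0 := (sqrt_pos.mpr pi_pos).ne'
        have : C ^ (ξ ^ 2 : ℝ) ≠ 0 := by positivity
        simp only [K]
        field_simp

theorem weak_turbulence_direct_density_general {Ω : Type*} [MeasurableSpace Ω]
    (P : Measure Ω) [IsProbabilityMeasure P]
    (T G : Ω → ℝ) (σ ξ p h₀ : ℝ)
    (hσ : 0 < σ) (hp : 0 < p) (hh₀ : 0 < h₀)
    (hT : Measurable T) (hG : Measurable G)
    (hTd : Measure.map T P = volume.withDensity fun t => ENNReal.ofReal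
      (if 0 < t then
        1 / (t * Real.sqrt (8 * π * σ ^ 2)) *
          Real.exp (-(Real.log t + 2 * σ ^ 2) ^ 2 / (8 * σ ^ 2))
      else 0))
    (hGd : Measure.map G P = volume.withDensity fun g => ENNReal.ofReal
      (if g ∈ Set.Icc (0 : ℝ) h₀ then
        ξ ^ 2 / h₀ ^ (ξ ^ 2 : ℝ) * g ^ (ξ ^ 2 - 1 : ℝ)
      else 0))
    (hindep : ProbabilityTheory.IndepFun T G P) :
    (Measure.map (fun ω => p * T ω * G ω) P).restrict (Set.Ioi 0)
      = (volume.withDensity fun h => ENNReal.ofReal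
          (ξ ^ 2 * h ^ (ξ ^ 2 - 1 : ℝ) / (2 * (h₀ * p) ^ (ξ ^ 2 : ℝ)) *
            Real.exp (2 * σ ^ 2 * ξ ^ 2 * (1 + ξ ^ 2)) *
            erfc ((Real.log (h / (h₀ * p)) + 2 * σ ^ 2 * (1 + 2 * ξ ^ 2)) /
              Real.sqrt (8 * σ ^ 2)))).restrict (Set.Ioi 0) := by
  replace hGd : P.map G = volume.withDensity fun g => ENNReal.ofReal (pointingErrorPDF ξ h₀ g) :=
    hGd
  have hpGd : P.map (fun ω => p * G ω) =
      volume.withDensity fun y => ENNReal.ofReal (pointingErrorPDF ξ (h₀ * p) y) := by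
    rw [show (fun ω => p * G ω) = (p * ·) ∘ G from rfl,
      ← Measure.map_map (measurable_const_mul p) hG, hGd,
      map_const_mul_withDensity hp.ne' (measurable_pointingErrorPDF ξ h₀).ennreal_ofReal]
    simp_rw [abs_of_pos hp, ← ENNReal.ofReal_mul (inv_nonneg.mpr hp.le)]
    exact congrArg _ (funext fun y => congrArg _ (inv_mul_pointingErrorPDF_div hp ξ h₀ y))
  replace hTd : P.map T = volume.withDensity fun t => ENNReal.ofReal (turbulencePDF σ t) := hTd
  have hH : P.map (fun ω => p * T ω * G ω) = P.map (fun ω => T ω * (p * G ω)) := by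
    congr 1; funext ω; ring
  rw [hH, map_mul_eq_withDensity_of_indepFun hT (hG.const_mul p)
      (hindep.comp measurable_id (measurable_const_mul p))
      (measurable_turbulencePDF σ).ennreal_ofReal
      (measurable_pointingErrorPDF ξ (h₀ * p)).ennreal_ofReal hTd hpGd,
    restrict_withDensity measurableSet_Ioi, restrict_withDensity measurableSet_Ioi]
  refine withDensity_congr_ae
    ((ae_restrict_iff' measurableSet_Ioi).mpr (ae_of_all _ fun h hh => ?_))
  exact lintegral_turbulencePDF_mul_pointingErrorPDF hσ.ne' (by positivity) hh

/-- Closed-form weak-turbulence direct-channel density (Eq. (10) of the paper):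
if `T` is log-normal with density `(1/(t√(8πσ²)))·exp(−(ln t + 2σ²)²/(8σ²))`,
`G` has the pointing-error density `(ξ²/h₀^{ξ²})·g^{ξ²−1}` on `[0, h₀]`, `T, G`
independent, and `p > 0`, then `H = p·T·G` has density
`(ξ² h^{ξ²−1}/(2 C_d^{ξ²}))·exp(2σ²ξ²(1+ξ²))·erfc((ln(h/C_d)+C_e)/√(8σ²))`
for `h > 0`, where `C_d = h₀·p` and `C_e = 2σ²(1+2ξ²)`. -/
theorem weak_turbulence_direct_density {Ω : Type*} [MeasurableSpace Ω]
    (P : Measure Ω) [IsProbabilityMeasure P]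
    (T G : Ω → ℝ) (σ ξ p h₀ : ℝ)
    (hσ : 0 < σ) (hξ : 0 < ξ) (hp : 0 < p) (hh₀ : 0 < h₀)
    (hT : Measurable T) (hG : Measurable G)
    (hTd : Measure.map T P = volume.withDensity fun t => ENNReal.ofReal
      (if 0 < t then
        1 / (t * Real.sqrt (8 * π * σ ^ 2)) *
          Real.exp (-(Real.log t + 2 * σ ^ 2) ^ 2 / (8 * σ ^ 2))
      else 0))
    (hGd : Measure.map G P = volume.withDensity fun g => ENNReal.ofReal
      (if g ∈ Set.Icc (0 : ℝ) h₀ then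
        ξ ^ 2 / h₀ ^ (ξ ^ 2 : ℝ) * g ^ (ξ ^ 2 - 1 : ℝ)
      else 0))
    (hindep : ProbabilityTheory.IndepFun T G P) :
    (Measure.map (fun ω => p * T ω * G ω) P).restrict (Set.Ioi 0)
      = (volume.withDensity fun h => ENNReal.ofReal
          (ξ ^ 2 * h ^ (ξ ^ 2 - 1 : ℝ) / (2 * (h₀ * p) ^ (ξ ^ 2 : ℝ)) *
            Real.exp (2 * σ ^ 2 * ξ ^ 2 * (1 + ξ ^ 2)) *
            erfc ((Real.log (h / (h₀ * p)) + 2 * σ ^ 2 * (1 + 2 * ξ ^ 2)) /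
              Real.sqrt (8 * σ ^ 2)))).restrict (Set.Ioi 0) :=
  weak_turbulence_direct_density_general P T G σ ξ p h₀ hσ hp hh₀ hT hG hTd hGd hindep
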